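/- Let H be a subgroup of G. The following are equivalent: (1) there exists a right idempotent state m on ℓ∞(G) with J¹(G,H) = Ann_L(m); (2) there exists a right idempotent state m on ℓ∞(G) with J¹(G,H) + ℂ·ε = Inv_L(m); (3) ℓ∞(G/H) is amenable. -/

import Mathlib

set_option linter.unusedSectionVars false

open scoped ENNReal ComplexOrder

noncomputable section

namespace QG

variable {G : Type*} [Group G]

/-- `ℓ∞(G)`: bounded complex functions on `G`. -/
abbrev Linf (G : Type*) : Type _ := lp (fun _ : G => ℂ) ∞

/-- `ℓ¹(G)`: summable complex functions on `G`. -/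
abbrev L1 (G : Type*) : Type _ := lp (fun _ : G => ℂ) 1

/-- The dual space `ℓ∞(G)*`. -/
abbrev DualLinf (G : Type*) : Type _ := StrongDual ℂ (Linf G)

lemma summable_norm (f : L1 G) : Summable fun s => ‖f s‖ := by
  have h := (lp.memℓp f).summable (by simp)
  simpa using h

lemma norm_apply_le (x : Linf G) (s : G) : ‖x s‖ ≤ ‖x‖ :=
  lp.norm_apply_le_norm ENNReal.top_ne_zero x s

/-- The constant function `1` in `ℓ∞(G)`. -/
def one' : Linf G :=
  ⟨fun _ => (1 : ℂ), memℓp_infty ⟨1, by rintro r ⟨t, rfl⟩; simp⟩⟩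

/-- Left translation: `(L_s x)(t) = x (s * t)`. -/
def Ltrans (s : G) (x : Linf G) : Linf G :=
  ⟨fun t => x (s * t),
    memℓp_infty (BddAbove.mono (by rintro r ⟨t, rfl⟩; exact ⟨s * t, rfl⟩) (lp.memℓp x).bddAbove)⟩

@[simp] lemma Ltrans_apply (s : G) (x : Linf G) (t : G) : Ltrans s x t = x (s * t) := rfl

lemma norm_Ltrans_le (s : G) (x : Linf G) : ‖Ltrans s x‖ ≤ ‖x‖ := by
  rw [lp.norm_eq_ciSup]
  exact ciSup_le fun t => norm_apply_le x (s * t)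

/-- The action `m * x` of `m ∈ ℓ∞(G)*` on `x ∈ ℓ∞(G)`: `(m*x)(s) = m (L_s x)`. -/
def starAct (m : DualLinf G) (x : Linf G) : Linf G :=
  ⟨fun s => m (Ltrans s x),
    memℓp_infty ⟨‖m‖ * ‖x‖, by
      rintro r ⟨s, rfl⟩
      calc ‖m (Ltrans s x)‖ ≤ ‖m‖ * ‖Ltrans s x‖ := m.le_opNorm _
        _ ≤ ‖m‖ * ‖x‖ :=
          mul_le_mul_of_nonneg_left (norm_Ltrans_le s x) (norm_nonneg m)⟩⟩

@[simp] lemma starAct_apply (m : DualLinf G) (x : Linf G) (s : G) :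
    starAct m x s = m (Ltrans s x) := rfl

lemma summable_mul_bound (f : L1 G) (x : Linf G) (t : G) :
    Summable fun s => ‖f s * x (s * t)‖ := by
  refine Summable.of_nonneg_of_le (fun s => norm_nonneg _) (fun s => ?_)
    ((summable_norm f).mul_right ‖x‖)
  rw [norm_mul]
  exact mul_le_mul_of_nonneg_left (norm_apply_le x (s * t)) (norm_nonneg _)

/-- The right action of `ℓ¹(G)` on `ℓ∞(G)`: `(x * f)(t) = ∑_s f s * x (s * t)`. -/
def rAct (x : Linf G) (f : L1 G) : Linf G :=
  ⟨fun t => ∑' s, f s * x (s * t),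
    memℓp_infty ⟨(∑' s, ‖f s‖) * ‖x‖, by
      rintro r ⟨t, rfl⟩
      calc ‖∑' s, f s * x (s * t)‖ ≤ ∑' s, ‖f s * x (s * t)‖ :=
            norm_tsum_le_tsum_norm (summable_mul_bound f x t)
        _ ≤ ∑' s, ‖f s‖ * ‖x‖ :=
            (summable_mul_bound f x t).tsum_le_tsum (fun s => by
                rw [norm_mul]
                exact mul_le_mul_of_nonneg_left (norm_apply_le x (s * t)) (norm_nonneg _))
              ((summable_norm f).mul_right _)
        _ = (∑' s, ‖f s‖) * ‖x‖ := tsum_mul_right⟩⟩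

@[simp] lemma rAct_apply (x : Linf G) (f : L1 G) (t : G) :
    rAct x f t = ∑' s, f s * x (s * t) := rfl

/-- The shear equivalence of `G × G`. -/
def shearEquiv (G : Type*) [Group G] : G × G ≃ G × G where
  toFun p := (p.2, p.2⁻¹ * p.1)
  invFun p := (p.1 * p.2, p.1)
  left_inv p := by simp
  right_inv p := by simp

lemma conv_prod_summable (f g : L1 G) :
    Summable fun p : G × G => ‖f p.2‖ * ‖g (p.2⁻¹ * p.1)‖ := by
  have h0 : Summable fun p : G × G => ‖f p.1‖ * ‖g p.2‖ :=
    (summable_norm f).mul_of_nonneg (summable_norm g) (fun _ => norm_nonneg _)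
      (fun _ => norm_nonneg _)
  have key : Summable ((fun p : G × G => ‖f p.1‖ * ‖g p.2‖) ∘ (shearEquiv G)) :=
    (shearEquiv G).summable_iff.mpr h0
  have heq : ((fun p : G × G => ‖f p.1‖ * ‖g p.2‖) ∘ (shearEquiv G)) =
      fun p : G × G => ‖f p.2‖ * ‖g (p.2⁻¹ * p.1)‖ := by
    funext p
    simp [shearEquiv, Function.comp]
  rwa [heq] at key

lemma conv_memℓp (f g : L1 G) : Memℓp (fun t : G => ∑' s, f s * g (s⁻¹ * t)) 1 := by
  have hp := conv_prod_summable f g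
  obtain ⟨h1, h2⟩ :=
    (summable_prod_of_nonneg (fun p => mul_nonneg (norm_nonneg _) (norm_nonneg _))).1 hp
  apply memℓp_gen
  simp only [ENNReal.toReal_one, Real.rpow_one]
  refine Summable.of_nonneg_of_le (fun t => norm_nonneg _) (fun t => ?_) h2
  calc ‖∑' s, f s * g (s⁻¹ * t)‖ ≤ ∑' s, ‖f s * g (s⁻¹ * t)‖ :=
        norm_tsum_le_tsum_norm (by simpa only [norm_mul] using h1 t)
    _ = ∑' s, ‖f s‖ * ‖g (s⁻¹ * t)‖ := tsum_congr fun s => norm_mul _ _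

/-- Convolution on `ℓ¹(G)`: `(f * g)(t) = ∑_s f s * g (s⁻¹ t)`. -/
def conv (f g : L1 G) : L1 G :=
  ⟨fun t => ∑' s, f s * g (s⁻¹ * t), conv_memℓp f g⟩

@[simp] lemma conv_apply (f g : L1 G) (t : G) : conv f g t = ∑' s, f s * g (s⁻¹ * t) := rfl

open Classical in
/-- The unit `ε = δ_e` of the convolution algebra `ℓ¹(G)`. -/
def eps : L1 G :=
  ⟨fun t => if t = 1 then 1 else 0, by
    apply memℓp_gen
    refine summable_of_ne_finset_zero (s := ({1} : Finset G)) ?_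
    intro t ht
    simp only [Finset.mem_singleton] at ht
    simp [ht]⟩

open Classical in
/-- Multiplication by the indicator function of `H`: `f · 1_H`. -/
def mulIndic (H : Subgroup G) (f : L1 G) : L1 G :=
  ⟨fun s => if s ∈ H then f s else 0, by
    apply memℓp_gen
    simp only [ENNReal.toReal_one, Real.rpow_one]
    refine Summable.of_nonneg_of_le (fun s => norm_nonneg _) (fun s => ?_) (summable_norm f)
    by_cases h : s ∈ H <;> simp [h]⟩

open Classical in
/-- The indicator function `1_H ∈ ℓ∞(G)` of a subgroup `H`. -/
def indic (H : Subgroup G) : Linf G :=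
  ⟨fun s => if s ∈ H then 1 else 0,
    memℓp_infty ⟨1, by rintro r ⟨s, rfl⟩; by_cases h : s ∈ H <;> simp [h]⟩⟩

/-- A state on `ℓ∞(G)`: unital positive functional. -/
def IsState (m : DualLinf G) : Prop :=
  m one' = 1 ∧ ∀ x : Linf G, (∀ s, 0 ≤ x s) → 0 ≤ m x

/-- `f ∈ Ann_L(m)`, i.e. `f * m = 0`. -/
def memAnnL (m : DualLinf G) (f : L1 G) : Prop :=
  ∀ x : Linf G, ∑' s, f s * m (Ltrans s x) = 0

/-- `f ∈ Inv_L(m, x₀)`, i.e. `f * m = f(x₀) · m`. -/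
def memInvLx (m : DualLinf G) (x₀ : Linf G) (f : L1 G) : Prop :=
  ∀ x : Linf G, ∑' s, f s * m (Ltrans s x) = (∑' s, f s * x₀ s) * m x

/-- `f ∈ Inv_L(m)`, i.e. `f * m = f(1) · m`. -/
def memInvL (m : DualLinf G) (f : L1 G) : Prop :=
  ∀ x : Linf G, ∑' s, f s * m (Ltrans s x) = (∑' s, f s) * m x

/-- A right idempotent state: a state with `m (m * x) = m x` for all `x`. -/
def IsRightIdempotentState (m : DualLinf G) : Prop :=
  IsState m ∧ ∀ x : Linf G, m (starAct m x) = m x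

/-- A character of `G` in `ℓ∞(G)`. -/
def IsCharacter (x : Linf G) : Prop :=
  (∀ s t : G, x (s * t) = x s * x t) ∧ ∀ s : G, ‖x s‖ = 1

/-- `ℓ∞(G/H)`, the right-`H`-invariant elements of `ℓ∞(G)`. -/
def LinfQuot (H : Subgroup G) : Set (Linf G) :=
  {x | ∀ s : G, ∀ h ∈ H, x (s * h) = x s}

/-- `J¹(G,H)`, the preannihilator of `ℓ∞(G/H)` in `ℓ¹(G)`. -/
def J1 (H : Subgroup G) : Set (L1 G) :=
  {f | ∀ x ∈ LinfQuot H, ∑' s, f s * x s = 0}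

/-- `E` witnesses relative amenability of `ℓ∞(G/H)`: a unital positive
`ℓ¹(G)`-module map `ℓ∞(G) → ℓ∞(G)` with range inside `ℓ∞(G/H)`. -/
def IsRelAmenMap (H : Subgroup G) (E : Linf G →ₗ[ℂ] Linf G) : Prop :=
  E one' = one' ∧
  (∀ x : Linf G, (∀ s, 0 ≤ x s) → ∀ s, 0 ≤ E x s) ∧
  (∀ x : Linf G, E x ∈ LinfQuot H) ∧
  (∀ (x : Linf G) (f : L1 G), E (rAct x f) = rAct (E x) f)

/-- `ℓ∞(G/H)` is relatively amenable. -/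
def RelAmen (H : Subgroup G) : Prop :=
  ∃ E : Linf G →ₗ[ℂ] Linf G, IsRelAmenMap H E

/-- `ℓ∞(G/H)` is amenable. -/
def Amen (H : Subgroup G) : Prop :=
  ∃ E : Linf G →ₗ[ℂ] Linf G, IsRelAmenMap H E ∧ ∀ x ∈ LinfQuot H, E x = x

/-- Amenability of a discrete group: existence of a left invariant mean. -/
def GroupAmenable (K : Type*) [Group K] : Prop :=
  ∃ μ : DualLinf K, IsState μ ∧ ∀ (k : K) (y : Linf K), μ (Ltrans k y) = μ y

/-- `H`-invariance of a functional on `ℓ∞(G)`. -/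
def HInvariant (H : Subgroup G) (μ : DualLinf G) : Prop :=
  ∀ h ∈ H, ∀ x : Linf G, μ (Ltrans h x) = μ x

/-- `J` has a bounded right approximate identity contained in `S`. -/
def HasBraiIn (J S : Set (L1 G)) : Prop :=
  ∃ (ι : Type) (l : Filter ι) (e : ι → L1 G), l.NeBot ∧
    (∃ C : ℝ, ∀ i, ‖e i‖ ≤ C) ∧ (∀ i, e i ∈ S) ∧
    ∀ f ∈ J, Filter.Tendsto (fun i => ‖conv f (e i) - f‖) l (nhds 0)

lemma one'_mem_LinfQuot (H : Subgroup G) : (one' : Linf G) ∈ LinfQuot H :=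
  fun _ _ _ => rfl

lemma Ltrans_mem_LinfQuot {H : Subgroup G} {x : Linf G} (hx : x ∈ LinfQuot H) (s : G) :
    Ltrans s x ∈ LinfQuot H := by
  intro t h hh
  show x (s * (t * h)) = x (s * t)
  rw [← mul_assoc]
  exact hx (s * t) h hh

/-- `ℓ∞(G/H)` as a subspace of `ℓ∞(G)`. -/
def LinfQuotSub (H : Subgroup G) : Submodule ℂ (Linf G) where
  carrier := LinfQuot H
  add_mem' := by
    intro a b ha hb s h hh
    show (a + b : Linf G) (s * h) = (a + b : Linf G) s
    rw [lp.coeFn_add]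
    simp only [Pi.add_apply]
    rw [ha s h hh, hb s h hh]
  zero_mem' := by
    intro s h hh
    show (0 : Linf G) (s * h) = (0 : Linf G) s
    rw [lp.coeFn_zero]
    simp
  smul_mem' := by
    intro c a ha s h hh
    show (c • a : Linf G) (s * h) = (c • a : Linf G) s
    rw [lp.coeFn_smul]
    simp only [Pi.smul_apply]
    rw [ha s h hh]

/-- The weak* topology on `ℓ∞(G) = ℓ¹(G)*`: the topology induced by the
pairings against elements of `ℓ¹(G)`. -/
def weakStarTop (G : Type*) [Group G] : TopologicalSpace (Linf G) :=
  TopologicalSpace.induced (fun (y : Linf G) => fun f : L1 G => ∑' s, f s * y s)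
    Pi.topologicalSpace

/-!
If `J¹(G,H) = Ann_L(m)`, then `δ_h - δ_e ∈ J¹(G,H)` shows that the state `m` is invariant under
left translation by `H`. Writing `g = ρ(g) t` along a right transversal of `H`, with `ρ(g) ∈ H`,
the state `ν(x) = m(x ∘ ρ)` is again `H`-invariant, and `x ↦ ν * x` is a conditional expectation
of `ℓ∞(G)` onto `ℓ∞(G/H)`. Conversely, an expectation `E` commutes with left translations, so
`E x = m * x` for the state `m = ev_e ∘ E` (bounded because it is positive), which is then right
idempotent with `Ann_L(m) = J¹(G,H)`.

For any state, `Inv_L(m) = Ann_L(m) + ℂε`; since `J¹(G,H)` and `Ann_L(m)` both lie in the kernel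
of `f ↦ f(1)` and `ε(1) = 1`, adding `ℂε` is injective on such sets, which gives (1) ⇔ (2).
-/

section Precomp

variable {α β : Type*}

def precomp (φ : α → β) : Linf β →L[ℂ] Linf α :=
  LinearMap.mkContinuous
    { toFun := fun x => ⟨fun a => x (φ a), memℓp_infty ⟨‖x‖, by
        rintro r ⟨a, rfl⟩
        exact lp.norm_apply_le_norm ENNReal.top_ne_zero x _⟩⟩
      map_add' := fun _ _ => rfl
      map_smul' := fun _ _ => rfl } 1
    fun x => by
      rw [one_mul]
      exact lp.norm_le_of_forall_le (norm_nonneg x) fun a =>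
        lp.norm_apply_le_norm ENNReal.top_ne_zero x _

@[simp] lemma precomp_apply (φ : α → β) (x : Linf β) (a : α) : precomp φ x a = x (φ a) := rfl

lemma summable_smul_of_norm_le (f : L1 G) {E : Type*} [NormedAddCommGroup E] [NormedSpace ℂ E]
    [CompleteSpace E] {v : G → E} {C : ℝ} (hv : ∀ a, ‖v a‖ ≤ C) : Summable fun a => f a • v a :=
  Summable.of_norm_bounded ((summable_norm f).mul_right C) fun a => by
    rw [norm_smul]
    exact mul_le_mul_of_nonneg_left (hv a) (norm_nonneg _)

lemma tsum_linf_apply {ι : Type*} {v : ι → Linf α} (hv : Summable v) (a : α) :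
    (∑' i, v i) a = ∑' i, v i a :=
  (lp.evalCLM ℂ (fun _ : α => ℂ) ∞ a).map_tsum hv

end Precomp

@[simp] lemma one'_apply (s : G) : (one' : Linf G) s = 1 := rfl

lemma Ltrans_one (x : Linf G) : Ltrans 1 x = x :=
  lp.ext <| funext fun t => by rw [Ltrans_apply, one_mul]

lemma Ltrans_one' (s : G) : Ltrans s (one' : Linf G) = one' := rfl

lemma Ltrans_mul (s t : G) (x : Linf G) : Ltrans (s * t) x = Ltrans t (Ltrans s x) :=
  lp.ext <| funext fun u => by simp only [Ltrans_apply, mul_assoc]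

section Pairing

def pairing (x : Linf G) : L1 G →ₗ[ℂ] ℂ where
  toFun f := ∑' s, f s * x s
  map_add' f g := by
    simp only [lp.coeFn_add, Pi.add_apply, add_mul]
    exact (summable_smul_of_norm_le f (norm_apply_le x)).tsum_add
      (summable_smul_of_norm_le g (norm_apply_le x))
  map_smul' c f := by
    simp only [lp.coeFn_smul, Pi.smul_apply, smul_eq_mul, mul_assoc, tsum_mul_left,
      RingHom.id_apply]

lemma pairing_apply (x : Linf G) (f : L1 G) : pairing x f = ∑' s, f s * x s := rfl

lemma pairing_one' (f : L1 G) : pairing one' f = ∑' s, f s := by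
  simp only [pairing_apply, one'_apply, mul_one]

lemma pairing_eps (x : Linf G) : pairing x eps = x 1 := by
  classical
  rw [pairing_apply, tsum_eq_single 1 fun s hs => by simp [eps, hs]]
  simp [eps]

lemma pairing_single [DecidableEq G] (x : Linf G) (a : G) : pairing x (lp.single 1 a 1) = x a := by
  rw [pairing_apply, tsum_eq_single a fun s hs => by simp [hs]]
  simp

lemma mem_J1_iff {H : Subgroup G} {f : L1 G} :
    f ∈ J1 H ↔ ∀ x ∈ LinfQuot H, pairing x f = 0 := Iff.rfl

lemma memAnnL_iff {m : DualLinf G} {f : L1 G} :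
    memAnnL m f ↔ ∀ x, pairing (starAct m x) f = 0 := Iff.rfl

lemma memInvL_iff {m : DualLinf G} {f : L1 G} :
    memInvL m f ↔ ∀ x, pairing (starAct m x) f = pairing one' f * m x := by
  simp only [pairing_one']
  rfl

end Pairing

section Translation

lemma rAct_eq_tsum (x : Linf G) (f : L1 G) : rAct x f = ∑' s, f s • Ltrans s x := by
  have hsum := summable_smul_of_norm_le f (norm_Ltrans_le · x)
  refine lp.ext <| funext fun t => ?_
  rw [rAct_apply, tsum_linf_apply hsum]
  rfl

lemma rAct_single [DecidableEq G] (x : Linf G) (s : G) :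
    rAct x (lp.single 1 s 1) = Ltrans s x :=
  lp.ext <| funext fun t => pairing_single (precomp (· * t) x) s

lemma map_rAct_of_commute_Ltrans (T : Linf G →L[ℂ] Linf G)
    (hT : ∀ s x, T (Ltrans s x) = Ltrans s (T x)) (x : Linf G) (f : L1 G) :
    T (rAct x f) = rAct (T x) f := by
  rw [rAct_eq_tsum, T.map_tsum (summable_smul_of_norm_le f (norm_Ltrans_le · x)), rAct_eq_tsum]
  simp only [map_smul, hT]

lemma map_Ltrans_of_map_rAct (E : Linf G →ₗ[ℂ] Linf G)
    (hE : ∀ x f, E (rAct x f) = rAct (E x) f) (s : G) (x : Linf G) :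
    E (Ltrans s x) = Ltrans s (E x) := by
  classical
  rw [← rAct_single, hE, rAct_single]

lemma starAct_apply_one (m : DualLinf G) (x : Linf G) : starAct m x 1 = m x := by
  rw [starAct_apply, Ltrans_one]

lemma starAct_one' (m : DualLinf G) : starAct m one' = m one' • one' :=
  lp.ext <| funext fun s => by simp [Ltrans_one']

lemma starAct_Ltrans (m : DualLinf G) (s : G) (x : Linf G) :
    starAct m (Ltrans s x) = Ltrans s (starAct m x) :=
  lp.ext <| funext fun u => by simp only [starAct_apply, Ltrans_apply, Ltrans_mul]

def starActL (m : DualLinf G) : Linf G →L[ℂ] Linf G :=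
  LinearMap.mkContinuous
    { toFun := starAct m
      map_add' := fun x y => lp.ext <| funext fun s => map_add m (Ltrans s x) (Ltrans s y)
      map_smul' := fun c x => lp.ext <| funext fun s => map_smul m c (Ltrans s x) } ‖m‖
    fun x => lp.norm_le_of_forall_le (by positivity) fun s =>
      (m.le_opNorm _).trans (mul_le_mul_of_nonneg_left (norm_Ltrans_le s x) (norm_nonneg m))

@[simp] lemma starActL_apply (m : DualLinf G) (x : Linf G) : starActL m x = starAct m x := rfl

lemma starAct_rAct (m : DualLinf G) (x : Linf G) (f : L1 G) :
    starAct m (rAct x f) = rAct (starAct m x) f :=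
  map_rAct_of_commute_Ltrans (starActL m) (starAct_Ltrans m) x f

end Translation

section Positivity

open ComplexStarModule

variable {A : Type*} [NormedAddCommGroup A] [NormedSpace ℂ A] [StarAddMonoid A]
  [NormedStarGroup A] [StarModule ℂ A]

lemma norm_realPart_le (a : A) : ‖(ℜ a : A)‖ ≤ ‖a‖ := by
  rw [realPart_apply_coe, norm_smul]
  calc ‖(2⁻¹ : ℝ)‖ * ‖a + star a‖ ≤ 2⁻¹ * (‖a‖ + ‖star a‖) := by
        rw [Real.norm_of_nonneg (by norm_num)]; gcongr; exact norm_add_le _ _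
    _ = ‖a‖ := by rw [norm_star]; ring

lemma norm_imaginaryPart_le (a : A) : ‖(ℑ a : A)‖ ≤ ‖a‖ := by
  rw [imaginaryPart_apply_coe, norm_smul, norm_neg, Complex.norm_I, one_mul, norm_smul]
  calc ‖(2⁻¹ : ℝ)‖ * ‖a - star a‖ ≤ 2⁻¹ * (‖a‖ + ‖star a‖) := by
        rw [Real.norm_of_nonneg (by norm_num)]; gcongr; exact norm_sub_le _ _
    _ = ‖a‖ := by rw [norm_star]; ring

variable {l : Linf G →ₗ[ℂ] ℂ} (h1 : l one' = 1) (hpos : ∀ x : Linf G, (∀ s, 0 ≤ x s) → 0 ≤ l x)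
include h1 hpos

-- `‖a‖ • 1 ± a` are positive, so `l a` is real and `-‖a‖ ≤ l a ≤ ‖a‖`.
lemma norm_apply_le_of_isSelfAdjoint {a : Linf G} (ha : IsSelfAdjoint a) : ‖l a‖ ≤ ‖a‖ := by
  have him : ∀ s, (a s).im = 0 := fun s => Complex.conj_eq_iff_im.1 (congrFun (congrArg (⇑) ha) s)
  have hre : ∀ s, |(a s).re| ≤ ‖a‖ := fun s =>
    (Complex.abs_re_le_norm _).trans (norm_apply_le a s)
  have hplus : 0 ≤ (‖a‖ : ℂ) + l a := by
    have := hpos ((‖a‖ : ℂ) • one' + a) fun s => by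
      show 0 ≤ (‖a‖ : ℂ) * 1 + a s
      rw [Complex.nonneg_iff]
      simp only [mul_one, Complex.add_re, Complex.ofReal_re, Complex.add_im, Complex.ofReal_im,
        him s]
      constructor <;> linarith [(abs_le.1 (hre s)).1]
    simpa [h1] using this
  have hminus : 0 ≤ (‖a‖ : ℂ) - l a := by
    have := hpos ((‖a‖ : ℂ) • one' - a) fun s => by
      show 0 ≤ (‖a‖ : ℂ) * 1 - a s
      rw [Complex.nonneg_iff]
      simp only [mul_one, Complex.sub_re, Complex.ofReal_re, Complex.sub_im, Complex.ofReal_im,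
        him s]
      constructor <;> linarith [(abs_le.1 (hre s)).2]
    simpa [h1] using this
  rw [Complex.nonneg_iff] at hplus hminus
  simp only [Complex.add_re, Complex.sub_re, Complex.ofReal_re, Complex.add_im, Complex.sub_im,
    Complex.ofReal_im, zero_add, zero_sub] at hplus hminus
  rw [← Complex.abs_re_eq_norm.2 (by linarith [hplus.2]), abs_le]
  constructor <;> linarith [hplus.1, hminus.1]

lemma norm_apply_le_two_mul (x : Linf G) : ‖l x‖ ≤ 2 * ‖x‖ := by
  have hdecomp : l x = l (ℜ x) + Complex.I * l (ℑ x) := by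
    rw [← smul_eq_mul, ← map_smul, ← map_add, realPart_add_I_smul_imaginaryPart]
  calc ‖l x‖ ≤ ‖l (ℜ x)‖ + ‖l (ℑ x)‖ := by
        rw [hdecomp]
        exact (norm_add_le _ _).trans_eq (by rw [norm_mul, Complex.norm_I, one_mul])
    _ ≤ ‖x‖ + ‖x‖ := by
        gcongr
        · exact (norm_apply_le_of_isSelfAdjoint h1 hpos (ℜ x).2).trans (norm_realPart_le x)
        · exact (norm_apply_le_of_isSelfAdjoint h1 hpos (ℑ x).2).trans (norm_imaginaryPart_le x)
    _ = 2 * ‖x‖ := by ring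

end Positivity

section Subgroup

variable {H : Subgroup G} {m : DualLinf G}

lemma hInvariant_of_J1_subset (hJ : J1 H ⊆ {f | memAnnL m f}) : HInvariant H m := by
  classical
  intro h hh x
  have hmem : (lp.single 1 h 1 - lp.single 1 1 1 : L1 G) ∈ J1 H := mem_J1_iff.2 fun y hy => by
    rw [map_sub, pairing_single, pairing_single, ← hy 1 h hh, one_mul, sub_self]
  have := memAnnL_iff.1 (hJ hmem) x
  rwa [map_sub, pairing_single, pairing_single, starAct_apply, starAct_apply, Ltrans_one,
    sub_eq_zero] at this

lemma J1_eq_of_range_starAct (h : Set.range (starAct m) = LinfQuot H) :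
    J1 H = {f | memAnnL m f} := by
  ext f
  rw [Set.mem_ofPred_eq, mem_J1_iff, memAnnL_iff, ← h, Set.forall_mem_range]

lemma isRelAmenMap_starActL (hm : IsState m) (hinv : HInvariant H m) :
    IsRelAmenMap H (starActL m : Linf G →ₗ[ℂ] Linf G) := by
  refine ⟨?_, fun x hx s => hm.2 _ fun t => hx _, fun x s h hh => ?_, starAct_rAct m⟩
  · simp [starAct_one', hm.1]
  · simp only [ContinuousLinearMap.coe_coe, starActL_apply, starAct_apply, Ltrans_mul, hinv h hh]

lemma exists_state_starAct_eq {E : Linf G →ₗ[ℂ] Linf G} (hE : IsRelAmenMap H E) :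
    ∃ m : DualLinf G, IsState m ∧ ∀ x, starAct m x = E x := by
  obtain ⟨hone, hpos, -, hmod⟩ := hE
  let l : Linf G →ₗ[ℂ] ℂ := (lp.evalₗ (fun _ : G => ℂ) ∞ 1).comp E
  have hl1 : l one' = 1 := by simp [l, hone]
  have hlpos : ∀ x : Linf G, (∀ s, 0 ≤ x s) → 0 ≤ l x := fun x hx => hpos x hx 1
  refine ⟨l.mkContinuous 2 (norm_apply_le_two_mul hl1 hlpos), ⟨hl1, hlpos⟩, fun x => ?_⟩
  refine lp.ext <| funext fun s => ?_
  simp [l, map_Ltrans_of_map_rAct E hmod]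

lemma amen_of_hInvariant {μ : DualLinf G} (hμ : IsState μ) (hinv : HInvariant H μ) : Amen H := by
  obtain ⟨T, hT, -⟩ := H.exists_isComplement_right 1
  let P := precomp fun g => ((hT.equiv g).1 : G)
  have hP_Ltrans : ∀ h ∈ H, ∀ y, P (Ltrans h y) = Ltrans h (P y) := fun h hh y =>
    lp.ext <| funext fun g => by simp [P, hT.equiv_mul_left_of_mem hh]
  have hP_quot : ∀ x ∈ LinfQuot H, ∀ s, P (Ltrans s x) = x s • one' := fun x hx s =>
    lp.ext <| funext fun g => by simp [P, hx s _ (hT.equiv g).1.2]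
  let ν := μ.comp P
  have hν : IsState ν := ⟨hμ.1, fun x hx => hμ.2 _ fun g => hx _⟩
  have hνinv : HInvariant H ν := fun h hh y => by
    simp only [ν, ContinuousLinearMap.comp_apply, hP_Ltrans h hh, hinv h hh]
  refine ⟨starActL ν, isRelAmenMap_starActL hν hνinv, fun x hx => lp.ext <| funext fun s => ?_⟩
  simp [ν, hP_quot x hx, hμ.1]

lemma exists_rightIdempotentState_of_amen (hA : Amen H) :
    ∃ m : DualLinf G, IsRightIdempotentState m ∧ J1 H = {f | memAnnL m f} := by
  obtain ⟨E, hE, hfix⟩ := hA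
  obtain ⟨m, hm, hmE⟩ := exists_state_starAct_eq hE
  have hrange : ∀ x, E x ∈ LinfQuot H := hE.2.2.1
  refine ⟨m, ⟨hm, fun x => ?_⟩, J1_eq_of_range_starAct ?_⟩
  · rw [← starAct_apply_one m (starAct m x), hmE, hmE, hfix _ (hrange x), ← hmE,
      starAct_apply_one]
  · ext y
    refine ⟨?_, fun hy => ⟨y, by rw [hmE, hfix y hy]⟩⟩
    rintro ⟨x, rfl⟩
    rw [hmE]
    exact hrange x

lemma tsum_eq_zero_of_mem_J1 {f : L1 G} (hf : f ∈ J1 H) : ∑' s, f s = 0 := by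
  rw [← pairing_one']
  exact hf one' (one'_mem_LinfQuot H)

lemma tsum_eq_zero_of_memAnnL (hm : m one' = 1) {f : L1 G} (hf : memAnnL m f) :
    ∑' s, f s = 0 := by
  rw [← pairing_one', ← memAnnL_iff.1 hf one', starAct_one', hm, one_smul]

lemma setOf_memInvL_eq (hm : m one' = 1) :
    {f | memInvL m f} = {f | ∃ g ∈ {g | memAnnL m g}, ∃ c : ℂ, f = g + c • eps} := by
  ext f
  simp only [Set.mem_ofPred_eq, memInvL_iff, memAnnL_iff]
  constructor
  · intro hf
    refine ⟨f - pairing one' f • eps, fun x => ?_, pairing one' f, (sub_add_cancel _ _).symm⟩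
    rw [map_sub, map_smul, hf, pairing_eps, starAct_apply_one, smul_eq_mul, sub_self]
  · rintro ⟨g, hg, c, rfl⟩ x
    rw [map_add, map_smul, map_add, map_smul, hg, pairing_eps, starAct_apply_one, pairing_eps,
      pairing_one', tsum_eq_zero_of_memAnnL hm (memAnnL_iff.2 hg)]
    simp

lemma subset_of_setOf_add_smul_eps_subset {J K : Set (L1 G)} (hJ : ∀ g ∈ J, ∑' s, g s = 0)
    (hK : ∀ g ∈ K, ∑' s, g s = 0)
    (h : {f | ∃ g ∈ J, ∃ c : ℂ, f = g + c • eps} ⊆ {f | ∃ g ∈ K, ∃ c : ℂ, f = g + c • eps}) :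
    J ⊆ K := by
  intro f hf
  obtain ⟨g, hg, c, hfg⟩ := h ⟨f, hf, 0, by rw [zero_smul, add_zero]⟩
  have hc : c = 0 := by
    have := congrArg (pairing one') hfg
    rwa [map_add, map_smul, pairing_eps, pairing_one', pairing_one', hJ f hf, hK g hg,
      one'_apply, smul_eq_mul, mul_one, zero_add, eq_comm] at this
  rwa [hfg, hc, zero_smul, add_zero]

lemma J1_eq_setOf_memAnnL_iff (hm : m one' = 1) :
    J1 H = {f | memAnnL m f} ↔
      {f | ∃ g ∈ J1 H, ∃ c : ℂ, f = g + c • eps} = {f | memInvL m f} := by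
  rw [setOf_memInvL_eq hm]
  refine ⟨fun h => h ▸ rfl, fun h => ?_⟩
  have hJ := fun g (hg : g ∈ J1 H) => tsum_eq_zero_of_mem_J1 hg
  have hK := fun g (hg : g ∈ {f | memAnnL m f}) => tsum_eq_zero_of_memAnnL hm hg
  exact (subset_of_setOf_add_smul_eps_subset hJ hK h.subset).antisymm
    (subset_of_setOf_add_smul_eps_subset hK hJ h.symm.subset)

end Subgroup

/-- characterizations of amenability of `ℓ∞(G/H)`. -/
theorem statement6 (H : Subgroup G) :
    [(∃ m : DualLinf G, IsRightIdempotentState m ∧ J1 H = {f : L1 G | memAnnL m f}),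
     (∃ m : DualLinf G, IsRightIdempotentState m ∧
        {f : L1 G | ∃ g ∈ J1 H, ∃ c : ℂ, f = g + c • eps} = {f : L1 G | memInvL m f}),
     Amen H].TFAE := by
  tfae_have 1 ↔ 2 :=
    exists_congr fun m => and_congr_right fun hm => J1_eq_setOf_memAnnL_iff hm.1.1
  tfae_have 1 → 3 := fun ⟨_, hm, hJ⟩ =>
    amen_of_hInvariant hm.1 (hInvariant_of_J1_subset hJ.subset)
  tfae_have 3 → 1 := exists_rightIdempotentState_of_amen
  tfae_finish

end QG
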